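/- Let U be an idempotent ultrafilter on (ℕ,+). If μ ∈ 𝔸_U, then for every p ∈ ℕ, μ({t ∈ 𝕋 : 2^p divides #(t)}) = 1. -/

import Mathlib

open scoped Classical

/-- The free binary system (free magma) on one generator. -/
abbrev 𝕋 : Type := FreeMagma Unit

/-- The generator `1` of `𝕋`. -/
def e1 : 𝕋 := FreeMagma.of ()

/-- `#(t)`: the number of occurrences of the generator in `t`. -/
def cnt : 𝕋 → ℕ
  | FreeMagma.of _ => 1
  | FreeMagma.mul a b => cnt a + cnt b

/-- The space `ℓ^∞(S)` of bounded real-valued functions on `S`. -/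
def Bdd (S : Type*) : Type _ := {f : S → ℝ // ∃ M, ∀ s, |f s| ≤ M}

/-- Package a function as an element of `Bdd S` (junk value if unbounded). -/
noncomputable def liftBdd {S : Type*} (g : S → ℝ) : Bdd S :=
  if h : ∃ M, ∀ s, |g s| ≤ M then ⟨g, h⟩ else ⟨fun _ => 0, 0, fun _ => by simp⟩

/-- The constant function as an element of `Bdd S`. -/
def constB (S : Type*) (c : ℝ) : Bdd S := ⟨fun _ => c, |c|, fun _ => le_rfl⟩

/-- The characteristic function of `E` as an element of `Bdd S`. -/
noncomputable def indB {S : Type*} (E : Set S) : Bdd S :=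
  liftBdd (fun s => if s ∈ E then 1 else 0)

/-- `Pr S`: finitely additive probability measures on `S`, identified with the
positive normalized linear functionals on `ℓ^∞(S)`.  The weak* topology is the
subspace topology inherited from the product topology on `Bdd S → ℝ`. -/
def PrSet (S : Type*) : Set (Bdd S → ℝ) :=
  {φ | (∀ f g h : Bdd S, (∀ s, h.1 s = f.1 s + g.1 s) → φ h = φ f + φ g) ∧
       (∀ (c : ℝ) (f g : Bdd S), (∀ s, g.1 s = c * f.1 s) → φ g = c * φ f) ∧
       (∀ f : Bdd S, (∀ s, 0 ≤ f.1 s) → 0 ≤ φ f) ∧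
       φ (constB S 1) = 1}

/-- `μ(E)`: the measure of a set `E ⊆ S`. -/
noncomputable def mE {S : Type*} (φ : Bdd S → ℝ) (E : Set S) : ℝ := φ (indB E)

/-- The product `μ ⊗ ν` of finitely additive measures:
`μ⊗ν(f) = μ(x ↦ ν(y ↦ f(x,y)))`. -/
noncomputable def prodM {S T : Type*} (φ : Bdd S → ℝ) (ψ : Bdd T → ℝ) :
    Bdd (S × T) → ℝ :=
  fun f => φ (liftBdd fun x => ψ (liftBdd fun y => f.1 (x, y)))

/-- The extension of a binary operation `op` on `S` to `Pr S`:
`μ⋆ν(f) = μ(x ↦ ν(y ↦ f(x ⋆ y)))`. -/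
noncomputable def starM {S : Type*} (op : S → S → S) (φ ψ : Bdd S → ℝ) :
    Bdd S → ℝ :=
  fun f => φ (liftBdd fun x => ψ (liftBdd fun y => f.1 (op x y)))

/-- The extension of `ˆ` to `Pr 𝕋`. -/
noncomputable def hmul (φ ψ : Bdd 𝕋 → ℝ) : Bdd 𝕋 → ℝ := starM (· * ·) φ ψ

/-- Finitely supported probability measures: finite convex combinations of
point evaluations. -/
def FinSuppPr (S : Type*) : Set (Bdd S → ℝ) :=
  {φ | ∃ (F : Finset S) (w : S → ℝ), (∀ s ∈ F, 0 ≤ w s) ∧ (∑ s ∈ F, w s) = 1 ∧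
      ∀ f : Bdd S, φ f = ∑ s ∈ F, w s * f.1 s}

/-- `𝔸_n`: finitely supported probability measures concentrated on `𝕋_n`. -/
def Asets (n : ℕ) : Set (Bdd 𝕋 → ℝ) :=
  {φ | ∃ (F : Finset 𝕋) (w : 𝕋 → ℝ), (∀ t ∈ F, cnt t = n) ∧ (∀ t ∈ F, 0 ≤ w t) ∧
      (∑ t ∈ F, w t) = 1 ∧ ∀ f : Bdd 𝕋, φ f = ∑ t ∈ F, w t * f.1 t}

/-- The extension of `+` on `ℕ` to ultrafilters: `A ∈ U+V` iff
`{m : {n : m+n ∈ A} ∈ V} ∈ U`. -/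
noncomputable def addU (U V : Ultrafilter ℕ) : Ultrafilter ℕ :=
  U.bind fun m => V.map fun n => m + n

/-- `𝔸_U`: the `U`-limit of the sets `𝔸_m`. -/
def AU (U : Ultrafilter ℕ) : Set (Bdd 𝕋 → ℝ) :=
  {μ | μ ∈ PrSet 𝕋 ∧ ∀ W : Set (Bdd 𝕋 → ℝ), IsOpen W → μ ∈ W →
      {m : ℕ | (W ∩ Asets m).Nonempty} ∈ U}

/-- The extension of `ˆ` to ultrafilters on `𝕋`: `E ∈ UˆV` iff
`{u : {v : uˆv ∈ E} ∈ V} ∈ U`. -/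
noncomputable def umul (U V : Ultrafilter 𝕋) : Ultrafilter 𝕋 :=
  U.bind fun u => V.map fun v => u * v

/-- Substitution of measures into a term `t`:
`t(μ_0,…,μ_{m-1})(f)` is the nested integral
`μ_0(x_0 ↦ ⋯ μ_{m-1}(x_{m-1} ↦ f(t(x⃗)))⋯)`. -/
noncomputable def substM : 𝕋 → List (Bdd 𝕋 → ℝ) → (Bdd 𝕋 → ℝ)
  | FreeMagma.of _, μs => μs.headI
  | FreeMagma.mul a b, μs =>
      hmul (substM a (μs.take (cnt a))) (substM b (μs.drop (cnt a)))

/-- `t_k`: iteratively remove the carets of `t` involving only leaves of index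
greater than `k`. -/
def tk : 𝕋 → ℕ → 𝕋
  | FreeMagma.of _, _ => e1
  | FreeMagma.mul a b, k => if k < cnt a then tk a k * e1 else a * tk b (k - cnt a)

/-- `l_k(t) = #(t_k) - 2` (truncated subtraction). -/
def lk (t : 𝕋) (k : ℕ) : ℕ := cnt (tk t k) - 2

/-- The subterm `t/σ` of `t` at address `σ` (`false` = left/`0`, `true` = right/`1`). -/
def subT : 𝕋 → List Bool → Option 𝕋
  | t, [] => some t
  | FreeMagma.of _, _ :: _ => none
  | FreeMagma.mul a b, c :: σ => if c then subT b σ else subT a σ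

/-- `σ <_lex ς` for incompatible binary sequences: at the first coordinate where
they differ, `σ` has `0` and `ς` has `1`. -/
def lexLT (σ ς : List Bool) : Prop :=
  ∃ p σ' ς', σ = p ++ (false :: σ') ∧ ς = p ++ (true :: ς')

/-- `x₀·E`. -/
def x0E (E : Set 𝕋) : Set 𝕋 :=
  {x | ∃ a b c : 𝕋, x = a * (b * c) ∧ (a * b) * c ∈ E}

/-- `x₁·E`. -/
def x1E (E : Set 𝕋) : Set 𝕋 :=
  {x | ∃ s a b c : 𝕋, x = s * (a * (b * c)) ∧ s * ((a * b) * c) ∈ E}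

/-- `u_σ` for a nonempty finite binary sequence `σ`. -/
def uSeq : List Bool → 𝕋
  | [] => e1
  | [_] => e1
  | b :: σ => if b then e1 * uSeq σ else uSeq σ * e1

/-- `a ≪ b`: for some `p`, `#(a) < 2^p` and `2^p` divides `#(b)`. -/
def ll (a b : 𝕋) : Prop := ∃ p : ℕ, cnt a < 2 ^ p ∧ 2 ^ p ∣ cnt b

/-- `r↾n`: the first `n` values of `r` as a finite binary sequence. -/
def rList (r : ℕ → Bool) (n : ℕ) : List Bool := (List.range n).map r

/-- The map `h_r : 𝕋 → 𝕋`. -/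
noncomputable def hr (r : ℕ → Bool) : 𝕋 → 𝕋
  | FreeMagma.of _ => uSeq (rList r 1)
  | FreeMagma.mul a b =>
      if ll a b then hr r a * hr r b else uSeq (rList r (cnt a + cnt b))

/-- The action of `h_r` on measures: `h_r(μ)(f) = μ(f ∘ h_r)`. -/
noncomputable def hrM (r : ℕ → Bool) (φ : Bdd 𝕋 → ℝ) : Bdd 𝕋 → ℝ :=
  fun f => φ (liftBdd fun t => f.1 (hr r t))

/-- `lev`: `l(1) = 0`, `l(aˆb) = l(a) + 1`. -/
def lev : 𝕋 → ℕ
  | FreeMagma.of _ => 0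
  | FreeMagma.mul a _ => lev a + 1

/-- `C` is closed under `ˆ`. -/
def HClosed (C : Set (Bdd 𝕋 → ℝ)) : Prop := ∀ μ ∈ C, ∀ ν ∈ C, hmul μ ν ∈ C

/-!
Reducing `#(t)` modulo `2^p` pushes an idempotent ultrafilter `U` on `ℕ` forward to an
idempotent ultrafilter on the finite group `ZMod (2^p)`; such an ultrafilter is principal at an
idempotent element, i.e. at `0`. Hence for `U`-almost every `m` the measures in `𝔸_m` give the set
`{t | 2^p ∣ #(t)}` measure `1`, and since that condition is weak*-closed it passes to the
`U`-limit points `μ ∈ 𝔸_U`.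
-/

lemma indB_apply {S : Type*} (E : Set S) (s : S) :
    (indB E).1 s = if s ∈ E then 1 else 0 := by
  have h : ∃ M, ∀ s : S, |if s ∈ E then (1 : ℝ) else 0| ≤ M :=
    ⟨1, fun s => by split <;> simp⟩
  unfold indB liftBdd
  exact congrFun (congrArg Subtype.val (dif_pos h)) s

lemma mem_addU {U V : Ultrafilter ℕ} {A : Set ℕ} :
    A ∈ addU U V ↔ {m | {n | m + n ∈ A} ∈ V} ∈ U :=
  Iff.rfl

lemma addU_self_eventually_map_eq_zero {G : Type*} [AddGroup G] [Finite G] (f : ℕ →+ G)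
    {U : Ultrafilter ℕ} (hU : addU U U = U) : {n | f n = 0} ∈ U := by
  obtain ⟨i, hi⟩ := (U.map f).eq_pure_of_finite
  have hiU : {n | f n = i} ∈ U := Ultrafilter.mem_map.mp (hi ▸ rfl : ({i} : Set G) ∈ U.map f)
  have hsum : {m | {n | f (m + n) = i} ∈ U} ∈ U := mem_addU.mp (hU.symm ▸ hiU)
  obtain ⟨m, hm, hfm : f m = i⟩ := Ultrafilter.nonempty_of_mem (U.inter_mem hsum hiU)
  obtain ⟨n, hmn : f (m + n) = i, hfn : f n = i⟩ :=
    Ultrafilter.nonempty_of_mem (U.inter_mem hm hiU)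
  have hii : i + i = i := by rwa [map_add, hfm, hfn] at hmn
  simpa only [add_eq_left.mp hii] using hiU

lemma addU_self_eventually_dvd {U : Ultrafilter ℕ} (hU : addU U U = U) {k : ℕ} (hk : k ≠ 0) :
    {n | k ∣ n} ∈ U := by
  have : NeZero k := ⟨hk⟩
  simpa only [Nat.coe_castAddMonoidHom, ZMod.natCast_eq_zero_iff] using
    addU_self_eventually_map_eq_zero (Nat.castAddMonoidHom (ZMod k)) hU

lemma mE_eq_one_of_mem_Asets {ν : Bdd 𝕋 → ℝ} {m : ℕ} (hν : ν ∈ Asets m) {E : Set 𝕋}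
    (hE : ∀ t, cnt t = m → t ∈ E) : mE ν E = 1 := by
  obtain ⟨F, w, hcnt, -, hw1, hνf⟩ := hν
  rw [mE, hνf, ← hw1]
  refine Finset.sum_congr rfl fun t ht => ?_
  rw [indB_apply, if_pos (hE t (hcnt t ht)), mul_one]

lemma AU_subset_of_isClosed {U : Ultrafilter ℕ} {C : Set (Bdd 𝕋 → ℝ)} (hC : IsClosed C)
    (hAC : {m | Asets m ⊆ C} ∈ U) : AU U ⊆ C := by
  intro μ hμ
  by_contra hμC
  obtain ⟨m, ⟨ν, hνC, hνA⟩, hmC⟩ :=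
    Ultrafilter.nonempty_of_mem (U.inter_mem (hμ.2 Cᶜ hC.isOpen_compl hμC) hAC)
  exact hνC (hmC hνA)

/-- every `μ ∈ 𝔸_U` concentrates on terms whose size is divisible
by `2^p`, for every `p`. -/
theorem AU_concentrates_on_divisible (U : Ultrafilter ℕ) (hU : addU U U = U)
    (μ : Bdd 𝕋 → ℝ) (hμ : μ ∈ AU U) (p : ℕ) :
    mE μ {t : 𝕋 | 2 ^ p ∣ cnt t} = 1 := by
  set E := {t : 𝕋 | 2 ^ p ∣ cnt t}
  have hclosed : IsClosed {φ : Bdd 𝕋 → ℝ | mE φ E = 1} :=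
    isClosed_eq (continuous_apply _) continuous_const
  have hAsets : {m | Asets m ⊆ {φ | mE φ E = 1}} ∈ U :=
    U.mem_of_superset (addU_self_eventually_dvd hU (pow_ne_zero p two_ne_zero))
      fun m hm _ hν => mE_eq_one_of_mem_Asets hν fun t ht => show 2 ^ p ∣ cnt t from ht ▸ hm
  exact AU_subset_of_isClosed hclosed hAsets hμ
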